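/- Let n ≥ 1, 0 < s < n/2, λ ≥ 1, and suppose (d_γ) are nonnegative reals indexed by a countable set Γ with d_γ ≥ d₀ ≥ d for all γ, where d ≥ 0 is fixed, and Σ_γ e^{-s·d_γ} ≤ A · min{1, d^{-k}} for some k ≥ n/2. Then Σ_γ λ^{n/2} e^{-(n/2)·d_γ} ≤ C·A·λ^n·(1+λd)^{-n/2} for a constant C depending only on n, s, k. -/

import Mathlib

/-!
Since every `d_γ ≥ 0` and `s ≤ n/2`, each term `e^{-(n/2) d_γ}` is dominated by `e^{-s d_γ}`, so the
sum is at most `λ^{n/2} A min(1, d^{-k})`. Since `k ≥ n/2`, `min(1, d^{-k}) ≤ (2/(1 + d))^{n/2}`,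
and `2/(1 + d) ≤ 2λ/(1 + λd)` for `λ ≥ 1`; this gives the bound with `C = 2^{n/2}`.
-/

lemma min_one_rpow_neg_le_rpow_two_div {d m k : ℝ} (hd : 0 ≤ d) (hm : 0 ≤ m) (hmk : m ≤ k) :
    min 1 (d ^ (-k)) ≤ (2 / (1 + d)) ^ m := by
  rcases le_total d 1 with hd1 | hd1
  · refine (min_le_left _ _).trans (Real.one_le_rpow ?_ hm)
    rw [le_div_iff₀ (by linarith)]
    linarith
  · calc min 1 (d ^ (-k)) ≤ d ^ (-k) := min_le_right _ _
      _ ≤ d ^ (-m) := Real.rpow_le_rpow_of_exponent_le hd1 (by linarith)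
      _ = (1 / d) ^ m := by rw [Real.rpow_neg hd, one_div, Real.inv_rpow hd]
      _ ≤ (2 / (1 + d)) ^ m := by
        refine Real.rpow_le_rpow (by positivity) ?_ hm
        rw [div_le_div_iff₀ (by linarith) (by linarith)]
        linarith

lemma two_div_one_add_le_two_mul_div_one_add_mul {d lam : ℝ} (hd : 0 ≤ d) (hlam : 1 ≤ lam) :
    2 / (1 + d) ≤ 2 * lam / (1 + lam * d) := by
  rw [div_le_div_iff₀ (by linarith) (by nlinarith)]
  nlinarith

lemma rpow_mul_min_one_rpow_neg_le {d m k lam : ℝ} (hd : 0 ≤ d) (hm : 0 ≤ m) (hmk : m ≤ k)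
    (hlam : 1 ≤ lam) :
    lam ^ m * min 1 (d ^ (-k)) ≤ 2 ^ m * lam ^ (2 * m) * (1 + lam * d) ^ (-m) := by
  have hlam0 : 0 < lam := by linarith
  have hden : 0 < 1 + lam * d := by positivity
  have hmin : min 1 (d ^ (-k)) ≤ 2 ^ m * lam ^ m * (1 + lam * d) ^ (-m) :=
    calc min 1 (d ^ (-k)) ≤ (2 / (1 + d)) ^ m := min_one_rpow_neg_le_rpow_two_div hd hm hmk
      _ ≤ (2 * lam / (1 + lam * d)) ^ m :=
        Real.rpow_le_rpow (by positivity) (two_div_one_add_le_two_mul_div_one_add_mul hd hlam) hm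
      _ = 2 ^ m * lam ^ m * (1 + lam * d) ^ (-m) := by
        rw [Real.div_rpow (by positivity) hden.le, Real.mul_rpow zero_le_two hlam0.le,
          Real.rpow_neg hden.le, div_eq_mul_inv]
  calc lam ^ m * min 1 (d ^ (-k)) ≤ lam ^ m * (2 ^ m * lam ^ m * (1 + lam * d) ^ (-m)) := by
        gcongr
    _ = 2 ^ m * lam ^ (2 * m) * (1 + lam * d) ^ (-m) := by
        rw [two_mul, Real.rpow_add hlam0]
        ring

lemma tsum_ofReal_mul_le_mul_tsum_ofReal {ι : Type*} {c : ℝ} {f g : ι → ℝ} (hc : 0 ≤ c)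
    (hfg : ∀ i, f i ≤ g i) :
    ∑' i, ENNReal.ofReal (c * f i) ≤ ENNReal.ofReal c * ∑' i, ENNReal.ofReal (g i) := by
  rw [← ENNReal.tsum_mul_left]
  gcongr with i
  rw [← ENNReal.ofReal_mul hc]
  gcongr
  exact hfg i

theorem stmt_16_general (n s k : ℝ) (hn : 1 ≤ n) (hsn : s < n / 2) (hk : n / 2 ≤ k) :
    ∃ C > 0, ∀ (Γ : Type) (_ : Countable Γ) (dγ : Γ → ℝ) (d₀ d A lam : ℝ),
      1 ≤ lam → 0 ≤ d → d ≤ d₀ → (∀ γ, 0 ≤ dγ γ) → (∀ γ, d₀ ≤ dγ γ) →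
      (∑' γ : Γ, ENNReal.ofReal (Real.exp (-s * dγ γ))) ≤
        ENNReal.ofReal (A * min 1 (d ^ (-k))) →
      (∑' γ : Γ, ENNReal.ofReal (lam ^ (n / 2) * Real.exp (-(n / 2) * dγ γ))) ≤
        ENNReal.ofReal (C * A * lam ^ n * (1 + lam * d) ^ (-(n / 2))) := by
  refine ⟨2 ^ (n / 2), by positivity, fun Γ _ dγ d₀ d A lam hlam hd _ hdγ _ hsum => ?_⟩
  have hm : 0 ≤ n / 2 := by linarith
  have hexp : ∀ γ, Real.exp (-(n / 2) * dγ γ) ≤ Real.exp (-s * dγ γ) := fun γ => by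
    gcongr
    nlinarith [hdγ γ]
  calc (∑' γ, ENNReal.ofReal (lam ^ (n / 2) * Real.exp (-(n / 2) * dγ γ)))
      ≤ ENNReal.ofReal (lam ^ (n / 2)) * ∑' γ, ENNReal.ofReal (Real.exp (-s * dγ γ)) :=
        tsum_ofReal_mul_le_mul_tsum_ofReal (by positivity) hexp
    _ ≤ ENNReal.ofReal (lam ^ (n / 2)) * ENNReal.ofReal (A * min 1 (d ^ (-k))) := by gcongr
    _ ≤ ENNReal.ofReal (2 ^ (n / 2) * A * lam ^ n * (1 + lam * d) ^ (-(n / 2))) := by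
      rw [← ENNReal.ofReal_mul (by positivity), ENNReal.ofReal_le_ofReal_iff']
      have hbound := rpow_mul_min_one_rpow_neg_le hd hm hk hlam
      rw [mul_div_cancel₀ n two_ne_zero] at hbound
      have hmin : 0 ≤ min 1 (d ^ (-k)) := le_min zero_le_one (by positivity)
      rcases le_total 0 A with hA | hA
      · left
        calc lam ^ (n / 2) * (A * min 1 (d ^ (-k))) = A * (lam ^ (n / 2) * min 1 (d ^ (-k))) := by
              ring
          _ ≤ A * (2 ^ (n / 2) * lam ^ n * (1 + lam * d) ^ (-(n / 2))) := by gcongr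
          _ = 2 ^ (n / 2) * A * lam ^ n * (1 + lam * d) ^ (-(n / 2)) := by ring
      · right
        exact mul_nonpos_of_nonneg_of_nonpos (by positivity) (mul_nonpos_of_nonpos_of_nonneg hA hmin)

theorem stmt_16 (n s k : ℝ) (hn : 1 ≤ n) (hs : 0 < s) (hsn : s < n / 2) (hk : n / 2 ≤ k) :
    ∃ C > 0, ∀ (Γ : Type) (_ : Countable Γ) (dγ : Γ → ℝ) (d₀ d A lam : ℝ),
      1 ≤ lam → 0 ≤ d → d ≤ d₀ → (∀ γ, 0 ≤ dγ γ) → (∀ γ, d₀ ≤ dγ γ) →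
      (∑' γ : Γ, ENNReal.ofReal (Real.exp (-s * dγ γ))) ≤
        ENNReal.ofReal (A * min 1 (d ^ (-k))) →
      (∑' γ : Γ, ENNReal.ofReal (lam ^ (n / 2) * Real.exp (-(n / 2) * dγ γ))) ≤
        ENNReal.ofReal (C * A * lam ^ n * (1 + lam * d) ^ (-(n / 2))) :=
  stmt_16_general n s k hn hsn hk
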